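/- Assume I(Y;Ỹ) > 0. Then there exists a constant E₊ > 0 such that for every integer t ≥ 1, if ((Y_i,Ȳ_i))_{i=1}^t are i.i.d. with law P_Y ⊗ P_Y (i.e., Y_i and Ȳ_i independent, each distributed P_Y), then P[ ∏_{i=1}^t λ(Y_i,Ȳ_i) > 1 ] ≤ exp(−t·E₊). -/

import Mathlib

/-!
Markov's inequality applied to `√(∏ λ(Yᵢ, Ȳᵢ))` bounds the probability by `ρ ^ t`, where
`ρ = ∑ P_Y(y) P_Y(ỹ) √λ(y, ỹ) = ∑ √(P_{YỸ} · P_Y ⊗ P_Y)` is the Bhattacharyya coefficient of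
`P_{YỸ}` and `P_Y ⊗ P_Y`. By AM-GM termwise, `ρ < 1` unless `P_{YỸ} = P_Y ⊗ P_Y`, which would force
`I(Y; Ỹ) = 0`. Finally `ρ ^ t ≤ exp (-t (1 - ρ))`, so `E₊ = 1 - ρ` works.
-/

open Filter Real

section

variable {𝒴 : Type*} [Fintype 𝒴] [Nonempty 𝒴]

/-- `p` is a probability mass function on a finite alphabet. -/
def IsPmf {α : Type*} [Fintype α] (p : α → ℝ) : Prop := (∀ a, 0 ≤ p a) ∧ ∑ a, p a = 1

/-- The first marginal of a pmf on `𝒴 × 𝒴`. -/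
noncomputable def margFst (p : 𝒴 × 𝒴 → ℝ) (y : 𝒴) : ℝ := ∑ z, p (y, z)

/-- The two marginals of `p` agree. -/
def MargEq (p : 𝒴 × 𝒴 → ℝ) : Prop := ∀ y, ∑ z, p (y, z) = ∑ z, p (z, y)

/-- The likelihood ratio `λ(y, ỹ)`. -/
noncomputable def lam2 (p : 𝒴 × 𝒴 → ℝ) (y z : 𝒴) : ℝ :=
  if 0 < margFst p y * margFst p z then p (y, z) / (margFst p y * margFst p z) else 0

/-- The mutual information `I(Y; Ỹ)`. -/
noncomputable def mutInf2 (p : 𝒴 × 𝒴 → ℝ) : ℝ :=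
  ∑ z : 𝒴 × 𝒴, if 0 < p z then p z * Real.log (lam2 p z.1 z.2) else 0

theorem two_mul_sqrt_mul_le_add {a b : ℝ} (ha : 0 ≤ a) (hb : 0 ≤ b) : 2 * √(a * b) ≤ a + b := by
  rw [Real.sqrt_mul ha]
  nlinarith [sq_nonneg (√a - √b), Real.sq_sqrt ha, Real.sq_sqrt hb]

theorem two_mul_sqrt_mul_lt_add {a b : ℝ} (ha : 0 ≤ a) (hb : 0 ≤ b) (hab : a ≠ b) :
    2 * √(a * b) < a + b := by
  have hsqrt : √a - √b ≠ 0 := sub_ne_zero.mpr fun h => hab ((Real.sqrt_inj ha hb).mp h)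
  rw [Real.sqrt_mul ha]
  nlinarith [sq_pos_of_ne_zero hsqrt, Real.sq_sqrt ha, Real.sq_sqrt hb]

theorem sum_sqrt_mul_lt_one_of_ne {α : Type*} [Fintype α] {P Q : α → ℝ} (hP : IsPmf P)
    (hQ : IsPmf Q) (hPQ : P ≠ Q) : ∑ a, √(P a * Q a) < 1 := by
  obtain ⟨a, ha⟩ := Function.ne_iff.mp hPQ
  have hlt : ∑ a, 2 * √(P a * Q a) < ∑ a, (P a + Q a) :=
    Finset.sum_lt_sum (fun a _ => two_mul_sqrt_mul_le_add (hP.1 a) (hQ.1 a))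
      ⟨a, Finset.mem_univ a, two_mul_sqrt_mul_lt_add (hP.1 a) (hQ.1 a) ha⟩
  rw [← Finset.mul_sum, Finset.sum_add_distrib, hP.2, hQ.2] at hlt
  linarith

theorem ite_one_lt_le_sqrt (x : ℝ) : (if 1 < x then 1 else 0) ≤ √x := by
  split_ifs with h
  · exact Real.one_le_sqrt.mpr h.le
  · exact Real.sqrt_nonneg x

theorem sum_prod_mul_ite_one_lt_prod_le_pow {α : Type*} [Fintype α] {Q L : α → ℝ}
    (hQ : ∀ a, 0 ≤ Q a) (hL : ∀ a, 0 ≤ L a) (t : ℕ) :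
    ∑ z : Fin t → α, (∏ i, Q (z i)) * (if 1 < ∏ i, L (z i) then 1 else 0) ≤
      (∑ a, Q a * √(L a)) ^ t := by
  rw [Fintype.sum_pow]
  refine Finset.sum_le_sum fun z _ => ?_
  calc (∏ i, Q (z i)) * (if 1 < ∏ i, L (z i) then 1 else 0)
      ≤ (∏ i, Q (z i)) * √(∏ i, L (z i)) :=
        mul_le_mul_of_nonneg_left (ite_one_lt_le_sqrt _) (Finset.prod_nonneg fun i _ => hQ _)
    _ = ∏ i, Q (z i) * √(L (z i)) := by
        rw [Real.sqrt_prod _ fun i _ => hL _, Finset.prod_mul_distrib]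

theorem pow_le_exp_neg_mul_one_sub {ρ : ℝ} (hρ : 0 ≤ ρ) (t : ℕ) :
    ρ ^ t ≤ Real.exp (-(t : ℝ) * (1 - ρ)) := by
  rw [neg_mul_comm, neg_sub, Real.exp_nat_mul]
  exact pow_le_pow_left₀ hρ (by linarith [Real.add_one_le_exp (ρ - 1)]) t

omit [Nonempty 𝒴] in
theorem margFst_nonneg {p : 𝒴 × 𝒴 → ℝ} (hp : ∀ w, 0 ≤ p w) (y : 𝒴) : 0 ≤ margFst p y :=
  Finset.sum_nonneg fun z _ => hp (y, z)

omit [Nonempty 𝒴] in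
theorem sum_margFst {p : 𝒴 × 𝒴 → ℝ} (hp : IsPmf p) : ∑ y, margFst p y = 1 := by
  rw [← hp.2, Fintype.sum_prod_type]
  rfl

omit [Nonempty 𝒴] in
theorem IsPmf.margFst_mul_margFst {p : 𝒴 × 𝒴 → ℝ} (hp : IsPmf p) :
    IsPmf fun w : 𝒴 × 𝒴 => margFst p w.1 * margFst p w.2 := by
  refine ⟨fun w => mul_nonneg (margFst_nonneg hp.1 w.1) (margFst_nonneg hp.1 w.2), ?_⟩
  rw [Fintype.sum_prod_type, ← Fintype.sum_mul_sum, sum_margFst hp, one_mul]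

omit [Nonempty 𝒴] in
theorem lam2_nonneg {p : 𝒴 × 𝒴 → ℝ} (hp : ∀ w, 0 ≤ p w) (y z : 𝒴) : 0 ≤ lam2 p y z := by
  unfold lam2
  split_ifs with h
  · exact div_nonneg (hp _) h.le
  · exact le_rfl

omit [Nonempty 𝒴] in
theorem margFst_mul_margFst_mul_sqrt_lam2 {p : 𝒴 × 𝒴 → ℝ} (hp : ∀ w, 0 ≤ p w) (y z : 𝒴) :
    margFst p y * margFst p z * √(lam2 p y z) = √(p (y, z) * (margFst p y * margFst p z)) := by
  rcases (mul_nonneg (margFst_nonneg hp y) (margFst_nonneg hp z)).lt_or_eq with hq | hq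
  · have hsplit : p (y, z) * (margFst p y * margFst p z) =
        p (y, z) / (margFst p y * margFst p z) * (margFst p y * margFst p z) ^ 2 := by
      field_simp
    rw [lam2, if_pos hq, hsplit, Real.sqrt_mul' _ (sq_nonneg _), Real.sqrt_sq hq.le, mul_comm]
  · simp [← hq]

omit [Nonempty 𝒴] in
theorem mutInf2_eq_zero_of_eq_margFst_mul_margFst {p : 𝒴 × 𝒴 → ℝ}
    (hind : ∀ w, p w = margFst p w.1 * margFst p w.2) : mutInf2 p = 0 := by
  refine Finset.sum_eq_zero fun w _ => ?_
  split_ifs with hw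
  · have hq : 0 < margFst p w.1 * margFst p w.2 := hind w ▸ hw
    rw [lam2, if_pos hq, ← hind w, div_self hw.ne', Real.log_one, mul_zero]
  · rfl

omit [Nonempty 𝒴] in
theorem sum_margFst_mul_margFst_mul_sqrt_lam2_lt_one {p : 𝒴 × 𝒴 → ℝ} (hp : IsPmf p)
    (hI : mutInf2 p ≠ 0) :
    ∑ w : 𝒴 × 𝒴, margFst p w.1 * margFst p w.2 * √(lam2 p w.1 w.2) < 1 := by
  have hne : p ≠ fun w => margFst p w.1 * margFst p w.2 :=
    fun h => hI (mutInf2_eq_zero_of_eq_margFst_mul_margFst (congrFun h))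
  simp only [margFst_mul_margFst_mul_sqrt_lam2 hp.1]
  exact sum_sqrt_mul_lt_one_of_ne hp hp.margFst_mul_margFst hne

theorem exponent_for_positive_llr_under_independence_general
    (p : 𝒴 × 𝒴 → ℝ) (hp : IsPmf p)
    (hI : 0 < mutInf2 p) :
    ∃ Eplus > (0 : ℝ), ∀ t : ℕ, 1 ≤ t →
      (∑ z : Fin t → 𝒴 × 𝒴, (∏ i, margFst p (z i).1 * margFst p (z i).2) *
          (if 1 < (∏ i, lam2 p (z i).1 (z i).2) then 1 else 0)) ≤
        Real.exp (-(t : ℝ) * Eplus) := by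
  set ρ := ∑ w : 𝒴 × 𝒴, margFst p w.1 * margFst p w.2 * √(lam2 p w.1 w.2)
  have hρ_lt_one : ρ < 1 := sum_margFst_mul_margFst_mul_sqrt_lam2_lt_one hp hI.ne'
  have hρ_nonneg : 0 ≤ ρ := Finset.sum_nonneg fun w _ =>
    mul_nonneg (hp.margFst_mul_margFst.1 w) (Real.sqrt_nonneg _)
  refine ⟨1 - ρ, sub_pos.mpr hρ_lt_one, fun t _ => ?_⟩
  calc _ ≤ ρ ^ t := sum_prod_mul_ite_one_lt_prod_le_pow hp.margFst_mul_margFst.1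
        (fun w => lam2_nonneg hp.1 w.1 w.2) t
    _ ≤ _ := pow_le_exp_neg_mul_one_sub hρ_nonneg t

/-- Exponential bound for the probability that the product of likelihood
ratios of `t` i.i.d. pairs with law `P_Y ⊗ P_Y` exceeds `1`. -/
theorem exponent_for_positive_llr_under_independence
    (p : 𝒴 × 𝒴 → ℝ) (hp : IsPmf p) (hm : MargEq p)
    (hI : 0 < mutInf2 p) :
    ∃ Eplus > (0 : ℝ), ∀ t : ℕ, 1 ≤ t →
      (∑ z : Fin t → 𝒴 × 𝒴, (∏ i, margFst p (z i).1 * margFst p (z i).2) *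
          (if 1 < (∏ i, lam2 p (z i).1 (z i).2) then 1 else 0)) ≤
        Real.exp (-(t : ℝ) * Eplus) :=
  exponent_for_positive_llr_under_independence_general p hp hI

end
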